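/- Let n ≥ 1 and 1 ≤ k ≤ n. Suppose A : ℝ → M_n(ℝ) is a matrix-valued function differentiable at t₀ with derivative A′(t₀). Then the function t ↦ σ_k(A(t)) is differentiable at t₀ and its derivative equals tr(T_{k−1}(A(t₀)) · A′(t₀)). -/

import Mathlib

/-!
The coefficients of a polynomial of degree at most `n` are fixed linear combinations of its
values at any `n + 1` distinct points (Lagrange interpolation). Hence it suffices to
differentiate `s ↦ det (1 + s A(t)) = ∑ₘ σₘ(A(t)) sᵐ` at all but finitely many `s`.
By Jacobi's formula this derivative is `tr (adj (1 + s A(t₀)) · s A')`, and whenever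
`1 + s A(t₀)` is invertible its adjugate is `∑_{m<n} sᵐ Tₘ(A(t₀))`: the recursion
`T_{m+1} = σ_{m+1} − A Tₘ` telescopes to
`(1 + s A) ∑_{m<N} sᵐ Tₘ = (∑_{m≤N} σₘ sᵐ) − s^N T_N`, and `Tₙ(A) = 0` by Cayley–Hamilton.
Reading off the coefficient of `s^k` gives `tr (T_{k−1}(A(t₀)) A')`.
-/

open Polynomial

/-- `σ_m(A)`: the coefficient of `t^m` in the polynomial `det (I + t A)`, i.e. the `m`-th
elementary symmetric function of the eigenvalues of `A`. -/
noncomputable def sigmaCoeff {n : ℕ} (A : Matrix (Fin n) (Fin n) ℝ) (m : ℕ) : ℝ :=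
  ((1 + (Polynomial.X : Polynomial ℝ) • A.map Polynomial.C).det).coeff m

/-- The `k`-th Newton transformation `T_k(A) = Σ_{j=0}^{k} (−1)^j σ_{k−j}(A) A^j`. -/
noncomputable def newtonT {n : ℕ} (A : Matrix (Fin n) (Fin n) ℝ) (k : ℕ) :
    Matrix (Fin n) (Fin n) ℝ :=
  ∑ j ∈ Finset.range (k + 1), ((-1 : ℝ) ^ j * sigmaCoeff A (k - j)) • A ^ j

open Matrix

section Jacobi

variable {𝕜 : Type*} [NontriviallyNormedField 𝕜] {ι : Type*} [Fintype ι] [DecidableEq ι]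

theorem Matrix.det_updateRow_eq_vecMul_adjugate {R : Type*} [CommRing R] (M : Matrix ι ι R)
    (i : ι) (b : ι → R) : (M.updateRow i b).det = (b ᵥ* M.adjugate) i := by
  rw [← cramer_transpose_apply, cramer_eq_adjugate_mulVec, ← adjugate_transpose, mulVec_transpose]

theorem Matrix.trace_adjugate_mul_eq_sum_det_updateRow {R : Type*} [CommRing R]
    (M N : Matrix ι ι R) : (M.adjugate * N).trace = ∑ i, (M.updateRow i (N i)).det := by
  rw [trace_mul_comm]
  simp only [det_updateRow_eq_vecMul_adjugate, trace, diag, mul_apply, vecMul, dotProduct]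

variable (𝕜 ι) in
noncomputable def Matrix.detRowContinuousMultilinear :
    ContinuousMultilinearMap 𝕜 (fun _ : ι => ι → 𝕜) 𝕜 :=
  { (detRowAlternating : (ι → 𝕜) [⋀^ι]→ₗ[𝕜] 𝕜).toMultilinearMap with
    cont := continuous_id.matrix_det }

/-- Jacobi's formula. -/
theorem Matrix.hasDerivAt_det {B : 𝕜 → Matrix ι ι 𝕜} {B' : Matrix ι ι 𝕜} {t₀ : 𝕜}
    (hB : ∀ i j, HasDerivAt (fun t => B t i j) (B' i j) t₀) :
    HasDerivAt (fun t => (B t).det) ((B t₀).adjugate * B').trace t₀ := by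
  have hcurve : HasDerivAt (fun t i j => B t i j) (fun i j => B' i j) t₀ :=
    hasDerivAt_pi.2 fun i => hasDerivAt_pi.2 (hB i)
  refine (((detRowContinuousMultilinear 𝕜 ι).hasFDerivAt fun i j => B t₀ i j).comp_hasDerivAt t₀
    hcurve).congr_deriv ?_
  rw [ContinuousMultilinearMap.linearDeriv_apply, trace_adjugate_mul_eq_sum_det_updateRow]
  rfl

end Jacobi

section Interpolation

theorem Polynomial.coeff_eq_sum_eval_mul_coeff_basis {F : Type*} [Field F] [DecidableEq F]
    {f : F[X]} {s : Finset F} (hf : f.degree < s.card) (k : ℕ) :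
    f.coeff k = ∑ x ∈ s, f.eval x * (Lagrange.basis s id x).coeff k := by
  conv_lhs => rw [Lagrange.eq_interpolate (Set.injOn_id _) hf]
  simp [Lagrange.interpolate_apply, finsetSum_coeff, coeff_C_mul]

theorem Polynomial.hasDerivAt_coeff_of_eventually_hasDerivAt_eval {𝕜 : Type*}
    [NontriviallyNormedField 𝕜] {p : 𝕜 → 𝕜[X]} {q : 𝕜[X]} {n : ℕ} {t₀ : 𝕜}
    (hp : ∀ t, (p t).natDegree ≤ n) (hq : q.natDegree ≤ n)
    (h : ∀ᶠ s in Filter.cofinite, HasDerivAt (fun t => (p t).eval s) (q.eval s) t₀) (k : ℕ) :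
    HasDerivAt (fun t => (p t).coeff k) (q.coeff k) t₀ := by
  classical
  have hinf : {s | HasDerivAt (fun t => (p t).eval s) (q.eval s) t₀}.Infinite := by
    simpa only [Set.compl_ofPred, not_not] using (Filter.eventually_cofinite.1 h).infinite_compl
  obtain ⟨S, hS, hcard⟩ := hinf.exists_subset_card_eq (n + 1)
  have hdeg {f : 𝕜[X]} (hf : f.natDegree ≤ n) : f.degree < S.card := by
    rw [hcard]
    exact (degree_le_of_natDegree_le hf).trans_lt (by exact_mod_cast n.lt_succ_self)
  simp only [coeff_eq_sum_eval_mul_coeff_basis (hdeg (hp _)),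
    coeff_eq_sum_eval_mul_coeff_basis (hdeg hq)]
  exact HasDerivAt.fun_sum fun x hx => (hS hx).mul_const _

end Interpolation

section NewtonTransformation

variable {R : Type*} [CommRing R] {ι : Type*} [Fintype ι] [DecidableEq ι]

theorem Matrix.eval_det_one_add_X_smul (M : Matrix ι ι R) (r : R) :
    ((1 + (X : R[X]) • M.map C).det).eval r = (1 + r • M).det := by
  simp [eval_det, ← smul_eq_mul_diagonal]

theorem Matrix.natDegree_det_one_add_X_smul_le (M : Matrix ι ι R) :
    (1 + (X : R[X]) • M.map C).det.natDegree ≤ Fintype.card ι := by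
  simpa [add_comm] using natDegree_det_X_add_C_le M 1

theorem Matrix.det_one_add_X_smul_ne_zero [Nontrivial R] (M : Matrix ι ι R) :
    (1 + (X : R[X]) • M.map C).det ≠ 0 := fun h => by
  simpa [h] using (coeff_zero_eq_eval_zero _).trans (eval_det_one_add_X_smul M 0)

variable {n : ℕ} (A : Matrix (Fin n) (Fin n) ℝ)

theorem sigmaCoeff_zero : sigmaCoeff A 0 = 1 := by
  rw [sigmaCoeff, coeff_zero_eq_eval_zero, eval_det_one_add_X_smul, zero_smul, add_zero, det_one]

theorem det_one_add_smul_eq_sum_sigmaCoeff (s : ℝ) :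
    (1 + s • A).det = ∑ m ∈ Finset.range (n + 1), sigmaCoeff A m * s ^ m := by
  rw [← eval_det_one_add_X_smul, eval_eq_sum_range' (n := n + 1)
    ((natDegree_det_one_add_X_smul_le A).trans_lt (by simp))]
  rfl

theorem sigmaCoeff_eq_coeff_charpoly_neg {m : ℕ} (hm : m ≤ n) :
    sigmaCoeff A m = (-A).charpoly.coeff (n - m) := by
  have hrev : (1 + (X : ℝ[X]) • A.map C).det = (-A).charpolyRev := by
    rw [charpolyRev]
    congr 1
    ext i j
    simp [sub_eq_add_neg]
  rw [sigmaCoeff, hrev, ← reverse_charpoly, coeff_reverse, charpoly_natDegree_eq_dim,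
    Fintype.card_fin, revAt_le hm]

/-- Cayley–Hamilton for `-A`. -/
theorem newtonT_self : newtonT A n = 0 := by
  have hCH := aeval_self_charpoly (-A)
  rw [aeval_eq_sum_range' (n := n + 1)
    (by rw [charpoly_natDegree_eq_dim, Fintype.card_fin]; omega)] at hCH
  rw [newtonT, ← hCH]
  refine Finset.sum_congr rfl fun j hj => ?_
  have hjn : j ≤ n := Nat.lt_succ_iff.1 (Finset.mem_range.1 hj)
  have hneg : (-A) ^ j = (-1 : ℝ) ^ j • A ^ j := by rw [← neg_one_smul ℝ A, _root_.smul_pow]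
  rw [sigmaCoeff_eq_coeff_charpoly_neg A (Nat.sub_le n j), Nat.sub_sub_self hjn, hneg, smul_smul,
    mul_comm]

theorem newtonT_succ (m : ℕ) :
    newtonT A (m + 1) = sigmaCoeff A (m + 1) • 1 - A * newtonT A m := by
  rw [newtonT, Finset.sum_range_succ', newtonT, Finset.mul_sum, sub_eq_add_neg, add_comm,
    ← Finset.sum_neg_distrib]
  simp only [pow_zero, one_mul, Nat.sub_zero, Nat.succ_sub_succ, mul_smul_comm, ← pow_succ',
    pow_succ (-1 : ℝ), mul_neg_one, neg_mul, neg_smul]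

theorem one_add_smul_mul_sum_newtonT (s : ℝ) (N : ℕ) :
    (1 + s • A) * ∑ m ∈ Finset.range N, s ^ m • newtonT A m =
      (∑ m ∈ Finset.range (N + 1), sigmaCoeff A m * s ^ m) • 1 - s ^ N • newtonT A N := by
  induction N with
  | zero => simp [newtonT, sigmaCoeff_zero]
  | succ N ih =>
    rw [Finset.sum_range_succ, mul_add, ih, Finset.sum_range_succ _ (N + 1), add_mul, one_mul,
      smul_mul_assoc, mul_smul_comm, smul_smul, ← pow_succ', newtonT_succ]
    simp only [smul_sub, add_smul, smul_smul, mul_comm (sigmaCoeff A (N + 1))]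
    abel

theorem adjugate_one_add_smul {s : ℝ} (hs : (1 + s • A).det ≠ 0) :
    (1 + s • A).adjugate = ∑ m ∈ Finset.range n, s ^ m • newtonT A m := by
  refine ((isUnit_iff_isUnit_det _).2 hs.isUnit).mul_left_cancel ?_
  rw [mul_adjugate, one_add_smul_mul_sum_newtonT, newtonT_self, smul_zero, sub_zero,
    det_one_add_smul_eq_sum_sigmaCoeff]

end NewtonTransformation

theorem hasDerivAt_det_one_add_smul {n : ℕ} {A : ℝ → Matrix (Fin n) (Fin n) ℝ}
    {A' : Matrix (Fin n) (Fin n) ℝ} {t₀ s : ℝ}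
    (hA : ∀ i j, HasDerivAt (fun t => A t i j) (A' i j) t₀) (hs : (1 + s • A t₀).det ≠ 0) :
    HasDerivAt (fun t => (1 + s • A t).det)
      (∑ m ∈ Finset.range n, (newtonT (A t₀) m * A').trace * s ^ (m + 1)) t₀ := by
  have hB (i j) : HasDerivAt (fun t => (1 + s • A t) i j) ((s • A') i j) t₀ := by
    simpa using ((hA i j).const_mul s).const_add ((1 : Matrix (Fin n) (Fin n) ℝ) i j)
  refine (hasDerivAt_det hB).congr_deriv ?_
  rw [adjugate_one_add_smul _ hs, Finset.sum_mul, trace_sum]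
  refine Finset.sum_congr rfl fun m _ => ?_
  rw [smul_mul_smul, trace_smul, smul_eq_mul, pow_succ, mul_comm]

theorem hasDerivAt_sigma_general (n : ℕ) (k : ℕ) (hk1 : 1 ≤ k) (hk2 : k ≤ n)
    (A : ℝ → Matrix (Fin n) (Fin n) ℝ) (A' : Matrix (Fin n) (Fin n) ℝ) (t₀ : ℝ)
    (hA : ∀ i j, HasDerivAt (fun t => A t i j) (A' i j) t₀) :
    HasDerivAt (fun t => sigmaCoeff (A t) k)
      ((newtonT (A t₀) (k - 1) * A').trace) t₀ := by
  set A₀ := A t₀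
  set q : ℝ[X] := ∑ m ∈ Finset.range n, C ((newtonT A₀ m * A').trace) * X ^ (m + 1)
  have hq_coeff : q.coeff k = (newtonT A₀ (k - 1) * A').trace := by
    obtain ⟨m, rfl⟩ := Nat.exists_eq_add_of_le' hk1
    simp [q, finsetSum_coeff, show m < n by omega]
  have hq_natDegree : q.natDegree ≤ n := natDegree_sum_le_of_forall_le _ _ fun m hm =>
    (natDegree_C_mul_X_pow_le _ _).trans (Finset.mem_range.1 hm)
  have hregular : ∀ᶠ s : ℝ in Filter.cofinite, (1 + s • A₀).det ≠ 0 :=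
    Filter.eventually_cofinite.2 <|
      (finite_setOfPred_isRoot (det_one_add_X_smul_ne_zero A₀)).subset fun s hs => by
        simpa [IsRoot, eval_det_one_add_X_smul] using hs
  have hq_eval (s : ℝ) :
      q.eval s = ∑ m ∈ Finset.range n, (newtonT A₀ m * A').trace * s ^ (m + 1) := by
    simp [q, eval_finsetSum]
  rw [← hq_coeff]
  refine hasDerivAt_coeff_of_eventually_hasDerivAt_eval
    (p := fun t => (1 + (X : ℝ[X]) • (A t).map C).det)
    (fun t => (natDegree_det_one_add_X_smul_le (A t)).trans_eq (Fintype.card_fin n)) hq_natDegree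
    (hregular.mono fun s hs => ?_) k
  rw [hq_eval]
  simpa only [eval_det_one_add_X_smul] using hasDerivAt_det_one_add_smul hA hs

/-- If `A : ℝ → M_n(ℝ)` is (entrywise) differentiable at `t₀` with
derivative `A'`, then `t ↦ σ_k(A t)` is differentiable at `t₀` with derivative
`tr (T_{k−1}(A t₀) · A')`. -/
theorem hasDerivAt_sigma (n : ℕ) (hn : 1 ≤ n) (k : ℕ) (hk1 : 1 ≤ k) (hk2 : k ≤ n)
    (A : ℝ → Matrix (Fin n) (Fin n) ℝ) (A' : Matrix (Fin n) (Fin n) ℝ) (t₀ : ℝ)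
    (hA : ∀ i j, HasDerivAt (fun t => A t i j) (A' i j) t₀) :
    HasDerivAt (fun t => sigmaCoeff (A t) k)
      ((newtonT (A t₀) (k - 1) * A').trace) t₀ :=
  hasDerivAt_sigma_general n k hk1 hk2 A A' t₀ hA
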